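/- arXiv:2011.04803 — 5 statements merged into one kernel-verified Lean document; each statement's English description precedes it below -/
import Mathlib

section
/- Let $0 < c < 1$ and for integers $t \geq 1$ define $a_t = \sum_{s=1}^{t} \frac{c^{t-s}}{s}$. Then $a_t \in O(1/t)$, i.e., there exist a constant $M > 0$ and an index $T \geq 1$ such that $a_t \leq M/t$ for all $t \geq T$. -/
/-! Since `t / s ≤ (t - s) + 1` for `1 ≤ s ≤ t`, the weight `t · c^(t-s)/s` is at most
`(k + 1) c^k` with `k = t - s`, so `t · a_t ≤ ∑ (k + 1) c^k = 1 / (1 - c)^2`. -/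

open Finset

lemma hasSum_succ_mul_geometric {𝕜 : Type*} [NormedDivisionRing 𝕜] [HasSummableGeomSeries 𝕜]
    {r : 𝕜} (hr : ‖r‖ < 1) :
    HasSum (fun k : ℕ ↦ ((k : 𝕜) + 1) * r ^ k) (1 / (1 - r) ^ 2) := by
  simpa [Nat.choose_one_right] using hasSum_choose_mul_geometric_of_norm_lt_one 1 hr

lemma div_le_sub_add_one {s t : ℕ} (hs : 1 ≤ s) (hst : s ≤ t) :
    (t : ℝ) / s ≤ ((t - s : ℕ) : ℝ) + 1 := by
  have hs' : (1 : ℝ) ≤ s := by exact_mod_cast hs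
  rw [div_le_iff₀ (by positivity), Nat.cast_sub hst]
  nlinarith [(Nat.cast_le (α := ℝ)).2 hst]

lemma sum_Icc_comp_sub_le_tsum {f : ℕ → ℝ} (hf : 0 ≤ f) (hsum : Summable f) (t : ℕ) :
    ∑ s ∈ Icc 1 t, f (t - s) ≤ ∑' k, f k := by
  have hinj : Set.InjOn (t - ·) (Icc 1 t : Set ℕ) := by
    intro a ha b hb hab
    simp only [coe_Icc, Set.mem_Icc] at ha hb hab
    omega
  rw [← sum_image (f := f) hinj]
  exact hsum.sum_le_tsum _ fun k _ ↦ hf k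

lemma mul_sum_geometric_div_le {c : ℝ} (hc0 : 0 ≤ c) (hc1 : c < 1) (t : ℕ) :
    (t : ℝ) * ∑ s ∈ Icc 1 t, c ^ (t - s) / (s : ℝ) ≤ 1 / (1 - c) ^ 2 := by
  have hgeom := hasSum_succ_mul_geometric (r := c) (by rwa [Real.norm_of_nonneg hc0])
  calc (t : ℝ) * ∑ s ∈ Icc 1 t, c ^ (t - s) / (s : ℝ)
      = ∑ s ∈ Icc 1 t, (t : ℝ) / s * c ^ (t - s) := by
        rw [mul_sum]
        exact sum_congr rfl fun s _ ↦ by ring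
    _ ≤ ∑ s ∈ Icc 1 t, (((t - s : ℕ) : ℝ) + 1) * c ^ (t - s) := by
        refine sum_le_sum fun s hs ↦ ?_
        obtain ⟨hs1, hst⟩ := mem_Icc.1 hs
        exact mul_le_mul_of_nonneg_right (div_le_sub_add_one hs1 hst) (by positivity)
    _ ≤ ∑' k : ℕ, ((k : ℝ) + 1) * c ^ k :=
        sum_Icc_comp_sub_le_tsum (fun k ↦ by positivity) hgeom.summable t
    _ = 1 / (1 - c) ^ 2 := hgeom.tsum_eq

/-- Lemma 1 of the paper: for `0 < c < 1`, the sequence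
`a t = ∑_{s=1}^{t} c^(t-s) / s` is `O(1/t)`. -/
theorem geometric_times_harmonic_sequence_isBigO
    (c : ℝ) (hc0 : 0 < c) (hc1 : c < 1) :
    ∃ M : ℝ, 0 < M ∧ ∃ T : ℕ, 1 ≤ T ∧ ∀ t : ℕ, T ≤ t →
      (∑ s ∈ Finset.Icc 1 t, c ^ (t - s) / (s : ℝ)) ≤ M / (t : ℝ) := by
  have h1c : 0 < 1 - c := sub_pos.2 hc1
  refine ⟨1 / (1 - c) ^ 2, by positivity, 1, le_rfl, fun t ht ↦ ?_⟩
  have htpos : (0 : ℝ) < t := by exact_mod_cast ht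
  rw [le_div_iff₀ htpos, mul_comm]
  exact mul_sum_geometric_div_le hc0.le hc1 t
end

section
/- Consider the noisy quadratic problem with symmetric matrix $H$ and i.i.d. square-integrable random vectors $\xi_0, \xi_1, \dots$ in $\mathbb{R}^d$ with mean $\bar\xi$ and covariance $C$, and suppose $\Sigma := H C H^T$ is positive definite. Let $(\theta_t)$ be any sequence of parameters where $\theta_t$ is measurable with respect to $\xi_0,\dots,\xi_{t-1}$ (e.g., generated by the filter-based updates), let $g_t = H(\theta_t - \xi_t)$ be the stochastic gradient, and define the filtered gradient by $m_0 = g_0$, $P_0 = \Sigma$, and for $t \geq 1$: $K_t = P_{t-1}(P_{t-1}+\Sigma)^{-1}$, $m_t = (I - K_t)(m_{t-1} + H(\theta_t - \theta_{t-1})) + K_t g_t$, $P_t = (I-K_t)P_{t-1}$. Then for every $t \geq 0$, $\mathbb{E}\big[(m_t - \nabla f(\theta_t))(m_t - \nabla f(\theta_t))^T\big] = P_t = \frac{1}{t+1}\Sigma$, where $\nabla f(\theta) = H(\theta - \bar\xi)$; in particular $\mathbb{E}[\|m_t - \nabla f(\theta_t)\|^2] = \frac{1}{t+1}\operatorname{trace}(\Sigma)$.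 -/
open MeasureTheory Matrix ProbabilityTheory
open scoped ENNReal

/-!
Because every sample has the same Hessian `H`, the transported estimate
`m (t-1) + H (θ t - θ (t-1))` carries the previous error `m (t-1) - H (θ (t-1) - ξ̄)` over
unchanged, whatever the parameters `θ` are. With `P t = Σ / (t+1)` the gain is `K t = 1 / (t+1)`,
so the filter error is exactly the running average of the i.i.d. centred noises `H (ξ̄ - ξ s)`,
`s ≤ t`, each of covariance `Σ`, and the covariance of that average is `Σ / (t+1)`.
-/

namespace Matrix

variable {n : Type*} [Fintype n] [DecidableEq n]

theorem smul_mul_inv_smul {S : Matrix n n ℝ} (hS : IsUnit S.det) (a : ℝ) {b : ℝ} (hb : b ≠ 0) :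
    (a • S) * (b • S)⁻¹ = (a / b) • (1 : Matrix n n ℝ) := by
  have := invertibleOfNonzero hb
  rw [Matrix.inv_smul S b hS, invOf_eq_inv, smul_mul_smul_comm, mul_nonsing_inv S hS,
    div_eq_mul_inv]

end Matrix

section KalmanRecursion

variable {n : Type*} [Fintype n] [DecidableEq n] {S : Matrix n n ℝ} {P K : ℕ → Matrix n n ℝ}

theorem kalman_covariance_eq (hS : IsUnit S.det) (hP0 : P 0 = S)
    (hK : ∀ t : ℕ, K (t + 1) = P t * (P t + S)⁻¹)
    (hP : ∀ t : ℕ, P (t + 1) = (1 - K (t + 1)) * P t) (t : ℕ) :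
    P t = ((t : ℝ) + 1)⁻¹ • S := by
  induction t with
  | zero => simpa using hP0
  | succ t ih =>
    have hPS : P t + S = (((t : ℝ) + 1)⁻¹ + 1) • S := by rw [ih, add_smul, one_smul]
    rw [hP t, hK t, hPS, ih, smul_mul_inv_smul hS _ (by positivity), sub_mul, one_mul,
      smul_mul_assoc, one_mul, smul_smul, ← sub_smul]
    congr 1
    push_cast
    field_simp
    ring

theorem kalman_gain_eq (hS : IsUnit S.det) (hP0 : P 0 = S)
    (hK : ∀ t : ℕ, K (t + 1) = P t * (P t + S)⁻¹)
    (hP : ∀ t : ℕ, P (t + 1) = (1 - K (t + 1)) * P t) (t : ℕ) :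
    K (t + 1) = ((t : ℝ) + 2)⁻¹ • (1 : Matrix n n ℝ) := by
  have hPS : P t + S = (((t : ℝ) + 1)⁻¹ + 1) • S := by
    rw [kalman_covariance_eq hS hP0 hK hP t, add_smul, one_smul]
  rw [hK t, hPS, kalman_covariance_eq hS hP0 hK hP t, smul_mul_inv_smul hS _ (by positivity)]
  congr 1
  field_simp
  ring

end KalmanRecursion

theorem eq_average_of_running_average {E : Type*} [AddCommGroup E] [Module ℝ E] {a b : ℕ → E}
    (h0 : a 0 = b 0)
    (hsucc : ∀ t : ℕ, a (t + 1) = (1 - ((t : ℝ) + 2)⁻¹) • a t + ((t : ℝ) + 2)⁻¹ • b (t + 1))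
    (t : ℕ) : a t = ((t : ℝ) + 1)⁻¹ • ∑ s ∈ Finset.range (t + 1), b s := by
  induction t with
  | zero => simpa using h0
  | succ t ih =>
    rw [hsucc t, ih, Finset.sum_range_succ _ (t + 1)]
    match_scalars <;> field_simp <;> ring

theorem filter_error_eq_average {n : Type*} [Fintype n] [DecidableEq n] (H : Matrix n n ℝ)
    (xbar : n → ℝ) {θ ξ m : ℕ → n → ℝ} {K : ℕ → Matrix n n ℝ}
    (hK : ∀ t : ℕ, K (t + 1) = ((t : ℝ) + 2)⁻¹ • (1 : Matrix n n ℝ))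
    (hm0 : m 0 = H *ᵥ (θ 0 - ξ 0))
    (hm : ∀ t : ℕ, m (t + 1) = (1 - K (t + 1)) *ᵥ (m t + H *ᵥ (θ (t + 1) - θ t)) +
      K (t + 1) *ᵥ H *ᵥ (θ (t + 1) - ξ (t + 1)))
    (t : ℕ) :
    m t - H *ᵥ (θ t - xbar) =
      ((t : ℝ) + 1)⁻¹ • ∑ s ∈ Finset.range (t + 1), H *ᵥ (xbar - ξ s) := by
  refine eq_average_of_running_average (a := fun t => m t - H *ᵥ (θ t - xbar)) ?_ (fun t => ?_) t
  · rw [hm0, ← mulVec_sub]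
    congr 1
    abel
  · simp only [hm t, hK t, sub_mulVec, smul_mulVec, one_mulVec, mulVec_add, mulVec_sub]
    module

section Moments

variable {m n Ω : Type*} [Fintype n] [MeasurableSpace Ω] {μ : Measure Ω} {v : Ω → n → ℝ}

theorem memLp_mulVec_apply {p : ℝ≥0∞} (A : Matrix m n ℝ) (hv : ∀ k, MemLp (fun ω => v ω k) p μ)
    (i : m) : MemLp (fun ω => (A *ᵥ v ω) i) p μ := by
  simp only [mulVec, dotProduct]
  exact memLp_finsetSum _ fun k _ => (hv k).const_mul (A i k)

theorem integral_mulVec_apply (A : Matrix m n ℝ) (hv : ∀ k, Integrable (fun ω => v ω k) μ)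
    (i : m) : ∫ ω, (A *ᵥ v ω) i ∂μ = (A *ᵥ fun k => ∫ ω, v ω k ∂μ) i := by
  simp only [mulVec, dotProduct]
  rw [integral_finsetSum _ fun k _ => (hv k).const_mul (A i k)]
  simp_rw [integral_const_mul]

theorem integral_mulVec_apply_mul_mulVec_apply (A : Matrix m n ℝ)
    (hv : ∀ k, MemLp (fun ω => v ω k) 2 μ) {M : Matrix n n ℝ}
    (hM : ∀ k l, ∫ ω, v ω k * v ω l ∂μ = M k l) (i j : m) :
    ∫ ω, (A *ᵥ v ω) i * (A *ᵥ v ω) j ∂μ = (A * M * Aᵀ) i j := by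
  have hint : ∀ k l, Integrable (fun ω => A i k * A j l * (v ω k * v ω l)) μ :=
    fun k l => ((hv k).integrable_mul (hv l)).const_mul _
  have hexpand : ∀ ω, (A *ᵥ v ω) i * (A *ᵥ v ω) j =
      ∑ k, ∑ l, A i k * A j l * (v ω k * v ω l) := fun ω => by
    simp only [mulVec, dotProduct, Finset.sum_mul_sum]
    exact Finset.sum_congr rfl fun k _ => Finset.sum_congr rfl fun l _ => by ring
  simp_rw [hexpand]
  rw [integral_finsetSum _ fun k _ => integrable_finsetSum _ fun l _ => hint k l]
  simp_rw [integral_finsetSum _ fun l _ => hint _ l, integral_const_mul, hM]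
  simp only [mul_apply, transpose_apply, Finset.sum_mul]
  rw [Finset.sum_comm]
  exact Finset.sum_congr rfl fun l _ => Finset.sum_congr rfl fun k _ => by ring

theorem integral_mulVec_sub_apply_eq_zero [IsProbabilityMeasure μ] (A : Matrix m n ℝ)
    {c : n → ℝ} (hv : ∀ k, Integrable (fun ω => v ω k) μ) (hc : ∀ k, c k = ∫ ω, v ω k ∂μ)
    (i : m) : ∫ ω, (A *ᵥ (c - v ω)) i ∂μ = 0 := by
  have hcentered : ∀ k, Integrable (fun ω => (c - v ω) k) μ :=
    fun k => (integrable_const (c k)).sub (hv k)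
  rw [integral_mulVec_apply A hcentered]
  simp [integral_sub (integrable_const _) (hv _), hc, ← Pi.zero_def]

theorem integral_mulVec_sub_apply_mul_mulVec_sub_apply [IsFiniteMeasure μ] (A : Matrix m n ℝ)
    {c : n → ℝ} {C : Matrix n n ℝ} (hv : ∀ k, MemLp (fun ω => v ω k) 2 μ)
    (hC : ∀ k l, C k l = ∫ ω, (v ω k - c k) * (v ω l - c l) ∂μ) (i j : m) :
    ∫ ω, (A *ᵥ (c - v ω)) i * (A *ᵥ (c - v ω)) j ∂μ = (A * C * Aᵀ) i j := by
  have hcentered : ∀ k, MemLp (fun ω => (c - v ω) k) 2 μ := fun k => (memLp_const (c k)).sub (hv k)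
  refine integral_mulVec_apply_mul_mulVec_apply A hcentered (fun k l => ?_) i j
  rw [hC]
  exact integral_congr_ae (ae_of_all _ fun ω => by simp only [Pi.sub_apply]; ring)

theorem integral_sum_sq_eq_trace {M : Matrix n n ℝ} (hv : ∀ i, MemLp (fun ω => v ω i) 2 μ)
    (hM : ∀ i, ∫ ω, v ω i * v ω i ∂μ = M i i) : ∫ ω, ∑ i, v ω i ^ 2 ∂μ = M.trace := by
  rw [integral_finsetSum _ fun i _ => (hv i).integrable_sq, trace]
  simp_rw [sq, hM, diag_apply]

end Moments

theorem integral_sum_apply_mul_sum_apply_of_iid {n Ω : Type*} [MeasurableSpace Ω]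
    {μ : Measure Ω} {η : ℕ → Ω → n → ℝ}
    (hindep : iIndepFun η μ) (hid : ∀ s, IdentDistrib (η s) (η 0) μ μ)
    (hL2 : ∀ i, MemLp (fun ω => η 0 ω i) 2 μ) (hmean : ∀ i, ∫ ω, η 0 ω i ∂μ = 0)
    (T : Finset ℕ) (i j : n) :
    ∫ ω, (∑ s ∈ T, η s ω i) * (∑ s ∈ T, η s ω j) ∂μ = T.card * ∫ ω, η 0 ω i * η 0 ω j ∂μ := by
  have hcoord : ∀ s k, IdentDistrib (fun ω => η s ω k) (fun ω => η 0 ω k) μ μ :=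
    fun s k => (hid s).comp (measurable_pi_apply k)
  have hsL2 : ∀ s k, MemLp (fun ω => η s ω k) 2 μ := fun s k => (hcoord s k).symm.memLp_snd (hL2 k)
  have hsmean : ∀ s k, ∫ ω, η s ω k ∂μ = 0 := fun s k => (hcoord s k).integral_eq.trans (hmean k)
  have hdiag : ∀ s, ∫ ω, η s ω i * η s ω j ∂μ = ∫ ω, η 0 ω i * η 0 ω j ∂μ := fun s =>
    ((hid s).comp ((measurable_pi_apply i).mul (measurable_pi_apply j))).integral_eq
  have hcross : ∀ s s', s ≠ s' → ∫ ω, η s ω i * η s' ω j ∂μ = 0 := fun s s' hss' => by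
    have hind : IndepFun (fun ω => η s ω i) (fun ω => η s' ω j) μ :=
      (hindep.indepFun hss').comp (measurable_pi_apply i) (measurable_pi_apply j)
    rw [hind.integral_fun_mul_eq_mul_integral (hsL2 s i).aestronglyMeasurable
      (hsL2 s' j).aestronglyMeasurable, hsmean, zero_mul]
  have hint : ∀ s s', Integrable (fun ω => η s ω i * η s' ω j) μ :=
    fun s s' => (hsL2 s i).integrable_mul (hsL2 s' j)
  simp_rw [Finset.sum_mul_sum]
  rw [integral_finsetSum _ fun s _ => integrable_finsetSum _ fun s' _ => hint s s',
    Finset.card_eq_sum_ones, Nat.cast_sum, Finset.sum_mul]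
  refine Finset.sum_congr rfl fun s hs => ?_
  rw [integral_finsetSum _ fun s' _ => hint s s',
    Finset.sum_eq_single_of_mem s hs fun s' _ hs' => hcross s s' (Ne.symm hs'), hdiag,
    Nat.cast_one, one_mul]

theorem meka_filter_error_covariance_noisy_quadratic_general
    {d : ℕ} (H : Matrix (Fin d) (Fin d) ℝ)
    {Ω : Type*} [MeasurableSpace Ω] (μ : Measure Ω) [IsProbabilityMeasure μ]
    (ξ : ℕ → Ω → Fin d → ℝ) (hmeas : ∀ t, Measurable (ξ t))
    (hindep : iIndepFun ξ μ)
    (hident : ∀ t, Measure.map (ξ t) μ = Measure.map (ξ 0) μ)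
    (hL2 : ∀ t i, MemLp (fun ω => ξ t ω i) 2 μ)
    (xbar : Fin d → ℝ) (hxbar : ∀ i, xbar i = ∫ ω, ξ 0 ω i ∂μ)
    (C : Matrix (Fin d) (Fin d) ℝ)
    (hC : ∀ i j, C i j = ∫ ω, (ξ 0 ω i - xbar i) * (ξ 0 ω j - xbar j) ∂μ)
    (S : Matrix (Fin d) (Fin d) ℝ) (hS : S = H * C * Hᵀ) (hSpd : S.PosDef)
    (θ : ℕ → Ω → Fin d → ℝ)
    -- the stochastic gradient
    (g : ℕ → Ω → Fin d → ℝ) (hg : ∀ t ω, g t ω = H.mulVec (θ t ω - ξ t ω))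
    -- the filter recursion
    (m : ℕ → Ω → Fin d → ℝ) (P K : ℕ → Matrix (Fin d) (Fin d) ℝ)
    (hm0 : ∀ ω, m 0 ω = g 0 ω) (hP0 : P 0 = S)
    (hK : ∀ t : ℕ, K (t + 1) = P t * (P t + S)⁻¹)
    (hm : ∀ (t : ℕ) ω, m (t + 1) ω =
      (1 - K (t + 1)).mulVec (m t ω + H.mulVec (θ (t + 1) ω - θ t ω)) +
        (K (t + 1)).mulVec (g (t + 1) ω))
    (hP : ∀ t : ℕ, P (t + 1) = (1 - K (t + 1)) * P t) :
    ∀ t : ℕ,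
      (∀ i j, ∫ ω, (m t ω i - H.mulVec (θ t ω - xbar) i) *
          (m t ω j - H.mulVec (θ t ω - xbar) j) ∂μ = P t i j) ∧
      P t = ((t : ℝ) + 1)⁻¹ • S ∧
      ∫ ω, ∑ i, (m t ω i - H.mulVec (θ t ω - xbar) i) ^ 2 ∂μ
        = ((t : ℝ) + 1)⁻¹ * S.trace := by
  intro t
  have hSdet : IsUnit S.det := hSpd.det_pos.ne'.isUnit
  have hPt := kalman_covariance_eq hSdet hP0 hK hP t
  set η : ℕ → Ω → Fin d → ℝ := fun s ω => H *ᵥ (xbar - ξ s ω)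
  have herr : ∀ ω i, m t ω i - (H *ᵥ (θ t ω - xbar)) i =
      ((t : ℝ) + 1)⁻¹ * ∑ s ∈ Finset.range (t + 1), η s ω i := fun ω i => by
    have h := filter_error_eq_average (θ := (θ · ω)) (ξ := (ξ · ω)) (m := (m · ω)) H xbar
      (kalman_gain_eq hSdet hP0 hK hP) ((hm0 ω).trans (hg 0 ω))
      (fun t => (hm t ω).trans (by rw [hg])) t
    simpa [Finset.sum_apply] using congrFun h i
  have hnoise : Measurable fun x : Fin d → ℝ => H *ᵥ (xbar - x) := by fun_prop
  have hηL2 : ∀ s i, MemLp (fun ω => η s ω i) 2 μ :=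
    fun s => memLp_mulVec_apply H fun k => (memLp_const _).sub (hL2 s k)
  have hid : ∀ s, IdentDistrib (η s) (η 0) μ μ := fun s =>
    (IdentDistrib.mk (hmeas s).aemeasurable (hmeas 0).aemeasurable (hident s)).comp hnoise
  have hmoment : ∀ i j, ∫ ω, (m t ω i - (H *ᵥ (θ t ω - xbar)) i) *
      (m t ω j - (H *ᵥ (θ t ω - xbar)) j) ∂μ = P t i j := fun i j => by
    simp_rw [herr, mul_mul_mul_comm _ (Finset.sum _ _), integral_const_mul]
    rw [integral_sum_apply_mul_sum_apply_of_iid (η := η) (hindep.comp _ fun _ => hnoise) hid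
      (hηL2 0)
      (integral_mulVec_sub_apply_eq_zero H (fun k => (hL2 0 k).integrable one_le_two) hxbar),
      integral_mulVec_sub_apply_mul_mulVec_sub_apply H (hL2 0) hC, ← hS, hPt]
    simp only [Finset.card_range, Nat.cast_add, Nat.cast_one, Matrix.smul_apply, smul_eq_mul]
    field_simp
  refine ⟨hmoment, hPt, ?_⟩
  rw [integral_sum_sq_eq_trace (fun i => ?_) fun i => hmoment i i, hPt, trace_smul, smul_eq_mul]
  simp_rw [herr]
  exact (memLp_finsetSum _ fun s _ => hηL2 s i).const_mul _

/-- In the noisy quadratic problem with i.i.d. square-integrable locations `ξ t` and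
positive definite gradient-noise covariance `Σ = H C Hᵀ`, the Kalman-filtered gradient
`m t` (with `m 0 = g 0`, `P 0 = Σ`, `K (t+1) = P t (P t + Σ)⁻¹`,
`m (t+1) = (I - K (t+1))(m t + H (θ (t+1) - θ t)) + K (t+1) g (t+1)`,
`P (t+1) = (I - K (t+1)) P t`) satisfies, for parameters `θ t` depending only on
`ξ 0, …, ξ (t-1)`:
`𝔼[(m t - ∇f(θ t))(m t - ∇f(θ t))ᵀ] = P t = Σ / (t+1)` and
`𝔼[‖m t - ∇f(θ t)‖²] = trace Σ / (t+1)`. -/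
theorem meka_filter_error_covariance_noisy_quadratic
    {d : ℕ} (H : Matrix (Fin d) (Fin d) ℝ) (hH : H.IsSymm)
    {Ω : Type*} [MeasurableSpace Ω] (μ : Measure Ω) [IsProbabilityMeasure μ]
    (ξ : ℕ → Ω → Fin d → ℝ) (hmeas : ∀ t, Measurable (ξ t))
    (hindep : iIndepFun ξ μ)
    (hident : ∀ t, Measure.map (ξ t) μ = Measure.map (ξ 0) μ)
    (hL2 : ∀ t i, MemLp (fun ω => ξ t ω i) 2 μ)
    (xbar : Fin d → ℝ) (hxbar : ∀ i, xbar i = ∫ ω, ξ 0 ω i ∂μ)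
    (C : Matrix (Fin d) (Fin d) ℝ)
    (hC : ∀ i j, C i j = ∫ ω, (ξ 0 ω i - xbar i) * (ξ 0 ω j - xbar j) ∂μ)
    (S : Matrix (Fin d) (Fin d) ℝ) (hS : S = H * C * Hᵀ) (hSpd : S.PosDef)
    -- `θ t` is measurable with respect to the σ-algebra generated by `ξ 0, …, ξ (t-1)`
    (θ : ℕ → Ω → Fin d → ℝ)
    (hθ : ∀ t : ℕ, Measurable[MeasurableSpace.comap
        (fun ω => fun s : Fin t => ξ (s : ℕ) ω) inferInstance] (θ t))
    -- the stochastic gradient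
    (g : ℕ → Ω → Fin d → ℝ) (hg : ∀ t ω, g t ω = H.mulVec (θ t ω - ξ t ω))
    -- the filter recursion
    (m : ℕ → Ω → Fin d → ℝ) (P K : ℕ → Matrix (Fin d) (Fin d) ℝ)
    (hm0 : ∀ ω, m 0 ω = g 0 ω) (hP0 : P 0 = S)
    (hK : ∀ t : ℕ, K (t + 1) = P t * (P t + S)⁻¹)
    (hm : ∀ (t : ℕ) ω, m (t + 1) ω =
      (1 - K (t + 1)).mulVec (m t ω + H.mulVec (θ (t + 1) ω - θ t ω)) +
        (K (t + 1)).mulVec (g (t + 1) ω))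
    (hP : ∀ t : ℕ, P (t + 1) = (1 - K (t + 1)) * P t) :
    ∀ t : ℕ,
      (∀ i j, ∫ ω, (m t ω i - H.mulVec (θ t ω - xbar) i) *
          (m t ω j - H.mulVec (θ t ω - xbar) j) ∂μ = P t i j) ∧
      P t = ((t : ℝ) + 1)⁻¹ • S ∧
      ∫ ω, ∑ i, (m t ω i - H.mulVec (θ t ω - xbar) i) ^ 2 ∂μ
        = ((t : ℝ) + 1)⁻¹ * S.trace :=
  meka_filter_error_covariance_noisy_quadratic_general H μ ξ hmeas hindep hident hL2 xbar hxbar C hC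
    S hS hSpd θ g hg m P K hm0 hP0 hK hm hP
end

section
/- (Proposition 1.) Consider the noisy quadratic problem $f(\theta,\xi) = \tfrac{1}{2}(\theta-\xi)^T H (\theta - \xi)$ where $H$ is symmetric with $\mu I \preceq H \preceq L I$ for some $0 < \mu \leq L$, and $\xi_0, \xi_1, \dots$ are i.i.d. square-integrable $\mathbb{R}^d$-valued random vectors with mean $\bar\xi$ and covariance $C$ such that $\Sigma := H C H^T$ is positive definite. Define $g_t = H(\theta_t - \xi_t)$, initialize $m_0 = g_0$, $P_0 = \Sigma$, and for $t \geq 1$ update $K_t = P_{t-1}(P_{t-1}+\Sigma)^{-1}$, $m_t = (I-K_t)(m_{t-1} + H(\theta_t - \theta_{t-1})) + K_t g_t$, $P_t = (I-K_t)P_{t-1}$, with parameter updates $\theta_{t+1} = \theta_t - \alpha m_t$ for a constant step size $0 < \alpha \leq 1/L$. Let $f(\theta) = \mathbb{E}_\xi[\tfrac12(\theta-\xi)^TH(\theta-\xi)]$ and $f_\ast = \inf_\theta f(\theta)$. Then $\mathbb{E}[f(\theta_t) - f_\ast] \in O(1/t)$: there exists $M > 0$ with $\mathbb{E}[f(\theta_t)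 - f_\ast] \leq M/t$ for all $t \geq 1$. -/
/-!
With a constant prior covariance the Kalman recursion has a closed form: `P t = S / (t + 1)` and
`K (t + 1) = I / (t + 2)`, so the filtered gradient is the gradient at `θ t` of the running average
of the locations, `m t = H (θ t - ξ̄ t)`. The error `e t = θ t - x̄` then obeys
`e (t + 1) = (I - α H) e t + α H (ξ̄ t - x̄)`, where `‖I - α H‖ ≤ 1 - α μ < 1` and
`𝔼 ‖ξ̄ t - x̄‖² = tr C / (t + 1)`. Jensen's inequality turns this into
`𝔼 ‖e (t + 1)‖² ≤ r 𝔼 ‖e t‖² + c / (t + 1)`, whose solutions are `O(1 / t)`, and the optimality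
gap is `½ eᵀ H e ≤ (L / 2) ‖e‖²`.
-/

open MeasureTheory Matrix ProbabilityTheory

open scoped RealInnerProductSpace

section Sequences

variable {r : ℝ}

-- Convexity of `x ↦ x ^ 2` at the points `a` and `b / (1 - r)` with weights `r` and `1 - r`.
theorem sq_mul_add_le (hr0 : 0 ≤ r) (hr1 : r < 1) (a b : ℝ) :
    (r * a + b) ^ 2 ≤ r * a ^ 2 + b ^ 2 / (1 - r) := by
  have h1r : 0 < 1 - r := by linarith
  have key : r * a ^ 2 + b ^ 2 / (1 - r) - (r * a + b) ^ 2 =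
      r / (1 - r) * ((1 - r) * a - b) ^ 2 := by
    field_simp
    ring
  have : 0 ≤ r / (1 - r) * ((1 - r) * a - b) ^ 2 := by positivity
  linarith

theorem le_pow_mul_add_sum_of_le_mul_add (hr : 0 ≤ r) {x b : ℕ → ℝ}
    (h : ∀ t, x (t + 1) ≤ r * x t + b t) (t : ℕ) :
    x t ≤ r ^ t * x 0 + ∑ s ∈ Finset.range t, r ^ (t - 1 - s) * b s := by
  induction t with
  | zero => simp
  | succ t ih =>
    have hshift : ∀ s ∈ Finset.range t, r * (r ^ (t - 1 - s) * b s) = r ^ (t - s) * b s := by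
      intro s hs
      rw [← mul_assoc, ← pow_succ', show t - 1 - s + 1 = t - s by grind]
    calc x (t + 1) ≤ r * x t + b t := h t
      _ ≤ r * (r ^ t * x 0 + ∑ s ∈ Finset.range t, r ^ (t - 1 - s) * b s) + b t := by gcongr
      _ = r ^ (t + 1) * x 0 + ∑ s ∈ Finset.range (t + 1), r ^ (t + 1 - 1 - s) * b s := by
        rw [mul_add, Finset.mul_sum, Finset.sum_congr rfl hshift, Finset.sum_range_succ]
        simp only [add_tsub_cancel_right, tsub_self, pow_zero, one_mul, pow_succ]
        ring

theorem sum_range_add_one_mul_pow_le (hr0 : 0 ≤ r) (hr1 : r < 1) (t : ℕ) :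
    ∑ j ∈ Finset.range t, ((j : ℝ) + 1) * r ^ j ≤ ((1 - r) ^ 2)⁻¹ := by
  have hr : ‖r‖ < 1 := by rwa [Real.norm_eq_abs, abs_of_nonneg hr0]
  have hsum : HasSum (fun j : ℕ => ((j : ℝ) + 1) * r ^ j) ((1 - r) ^ 2)⁻¹ := by
    have h := (hasSum_coe_mul_geometric_of_norm_lt_one hr).add (hasSum_geometric_of_lt_one hr0 hr1)
    rw [show r / (1 - r) ^ 2 + (1 - r)⁻¹ = ((1 - r) ^ 2)⁻¹ by
      field_simp [show 1 - r ≠ 0 by linarith]; ring] at h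
    simpa [add_mul] using h
  exact sum_le_hasSum _ (fun j _ => by positivity) hsum

theorem sum_pow_mul_inv_le (hr0 : 0 ≤ r) (hr1 : r < 1) {t : ℕ} (ht : 1 ≤ t) :
    ∑ s ∈ Finset.range t, r ^ (t - 1 - s) * ((s : ℝ) + 1)⁻¹ ≤ ((1 - r) ^ 2)⁻¹ / t := by
  have ht0 : (0 : ℝ) < t := by exact_mod_cast ht
  -- `t ≤ (t - s) * (s + 1)`: the harmonic weight is dominated by the reflected linear one
  have hterm : ∀ s ∈ Finset.range t, r ^ (t - 1 - s) * ((s : ℝ) + 1)⁻¹ ≤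
      (((t - 1 - s : ℕ) : ℝ) + 1) * r ^ (t - 1 - s) / t := by
    intro s hs
    have hst : s < t := Finset.mem_range.mp hs
    have hcast : ((t - 1 - s : ℕ) : ℝ) + 1 = t - s := by
      rw [Nat.cast_sub (by omega), Nat.cast_sub (by omega)]; push_cast; ring
    rw [hcast, ← div_eq_mul_inv, div_le_div_iff₀ (by positivity) ht0]
    have : (t : ℝ) ≤ (t - s) * (s + 1) := by
      have : (s : ℝ) + 1 ≤ t := by exact_mod_cast hst
      nlinarith
    nlinarith [pow_nonneg hr0 (t - 1 - s)]
  calc ∑ s ∈ Finset.range t, r ^ (t - 1 - s) * ((s : ℝ) + 1)⁻¹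
      ≤ ∑ s ∈ Finset.range t, (((t - 1 - s : ℕ) : ℝ) + 1) * r ^ (t - 1 - s) / t :=
        Finset.sum_le_sum hterm
    _ = (∑ j ∈ Finset.range t, ((j : ℝ) + 1) * r ^ j) / t := by
        rw [← Finset.sum_div, Finset.sum_range_reflect (fun j => ((j : ℝ) + 1) * r ^ j)]
    _ ≤ ((1 - r) ^ 2)⁻¹ / t := by gcongr; exact sum_range_add_one_mul_pow_le hr0 hr1 t

theorem le_div_of_le_mul_add_div (hr0 : 0 ≤ r) (hr1 : r < 1) {c : ℝ} (hc : 0 ≤ c) {Y : ℕ → ℝ}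
    (hY0 : 0 ≤ Y 0) (hY : ∀ t, Y (t + 1) ≤ r * Y t + c / ((t : ℝ) + 1)) {t : ℕ} (ht : 1 ≤ t) :
    Y t ≤ (Y 0 + c) * ((1 - r) ^ 2)⁻¹ / t := by
  have ht0 : (0 : ℝ) < t := by exact_mod_cast ht
  have hpow : r ^ t ≤ ((1 - r) ^ 2)⁻¹ / t := by
    rw [le_div_iff₀ ht0]
    have := Finset.single_le_sum (fun j _ => by positivity) (Finset.self_mem_range_succ t)
      |>.trans (sum_range_add_one_mul_pow_le hr0 hr1 (t + 1))
    nlinarith [pow_nonneg hr0 t]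
  have hconv := sum_pow_mul_inv_le hr0 hr1 ht
  calc Y t ≤ r ^ t * Y 0 + ∑ s ∈ Finset.range t, r ^ (t - 1 - s) * (c / ((s : ℝ) + 1)) :=
        le_pow_mul_add_sum_of_le_mul_add hr0 hY t
    _ = r ^ t * Y 0 + c * ∑ s ∈ Finset.range t, r ^ (t - 1 - s) * ((s : ℝ) + 1)⁻¹ := by
        rw [Finset.mul_sum]; congr 1; exact Finset.sum_congr rfl fun s _ => by ring
    _ ≤ ((1 - r) ^ 2)⁻¹ / t * Y 0 + c * (((1 - r) ^ 2)⁻¹ / t) := by gcongr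
    _ = (Y 0 + c) * ((1 - r) ^ 2)⁻¹ / t := by ring

end Sequences

theorem ContinuousLinearMap.norm_le_of_abs_inner_le {E : Type*} [NormedAddCommGroup E]
    [InnerProductSpace ℝ E] {T : E →L[ℝ] E} (hT : (T : E →ₗ[ℝ] E).IsSymmetric) {c : ℝ}
    (hc : 0 ≤ c) (h : ∀ x, |⟪T x, x⟫| ≤ c * ‖x‖ ^ 2) : ‖T‖ ≤ c := by
  rw [T.norm_eq_iSup_rayleighQuotient hT]
  refine ciSup_le fun x => ?_
  rcases eq_or_ne x 0 with rfl | hx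
  · simpa using hc
  · rw [abs_div, abs_sq, div_le_iff₀ (by positivity)]
    exact h x

theorem norm_toLp_sq {n : Type*} [Fintype n] (v : n → ℝ) : ‖WithLp.toLp 2 v‖ ^ 2 = v ⬝ᵥ v := by
  rw [← real_inner_self_eq_norm_sq, EuclideanSpace.inner_toLp_toLp, star_trivial]

namespace Matrix

theorem PosSemidef.of_sub_smul_one {n : Type*} [DecidableEq n] {B : Matrix n n ℝ} {c : ℝ}
    (h : (B - c • 1).PosSemidef) (hc : 0 ≤ c) : B.PosSemidef := by
  simpa using h.add (PosSemidef.one.smul hc)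

variable {n : Type*} [Fintype n] [DecidableEq n]

theorem PosSemidef.dotProduct_mulVec_le {B : Matrix n n ℝ} {c : ℝ}
    (h : (c • 1 - B).PosSemidef) (v : n → ℝ) : v ⬝ᵥ B *ᵥ v ≤ c * (v ⬝ᵥ v) := by
  have := h.dotProduct_mulVec_nonneg v
  simp only [star_trivial, sub_mulVec, smul_mulVec, one_mulVec, dotProduct_sub,
    dotProduct_smul, smul_eq_mul] at this
  linarith

theorem PosSemidef.norm_toEuclideanCLM_le {B : Matrix n n ℝ} (hB : B.PosSemidef) {c : ℝ}
    (hc0 : 0 ≤ c) (hc : (c • 1 - B).PosSemidef) : ‖toEuclideanCLM (𝕜 := ℝ) B‖ ≤ c := by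
  refine ContinuousLinearMap.norm_le_of_abs_inner_le
    (isSymmetric_toEuclideanLin_iff.mpr hB.isHermitian) hc0 fun x => ?_
  rw [real_inner_comm, inner_toEuclideanCLM, ← x.toLp_ofLp, norm_toLp_sq]
  have := hB.dotProduct_mulVec_nonneg x.ofLp
  rw [star_trivial] at this
  rw [abs_of_nonneg this]
  exact hc.dotProduct_mulVec_le _

variable {H : Matrix n n ℝ} {mu L α : ℝ}

theorem norm_toEuclideanCLM_smul_le (hH : H.PosSemidef) (hHub : (L • 1 - H).PosSemidef)
    (hL : 0 ≤ L) (hα : 0 ≤ α) : ‖toEuclideanCLM (𝕜 := ℝ) (α • H)‖ ≤ α * L := by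
  refine (hH.smul hα).norm_toEuclideanCLM_le (mul_nonneg hα hL) ?_
  convert hHub.smul hα using 1
  module

theorem norm_toEuclideanCLM_one_sub_smul_le (hHlb : (H - mu • 1).PosSemidef)
    (hHub : (L • 1 - H).PosSemidef) (hmuL : mu ≤ L) (hα : 0 ≤ α) (hαL : α * L ≤ 1) :
    ‖toEuclideanCLM (n := n) (𝕜 := ℝ) (1 - α • H)‖ ≤ 1 - α * mu := by
  refine PosSemidef.norm_toEuclideanCLM_le (B := 1 - α • H) ?_ (by nlinarith) ?_
  · convert (PosSemidef.one.smul (sub_nonneg.mpr hαL)).add (hHub.smul hα) using 1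
    module
  · convert hHlb.smul hα using 1
    module

end Matrix

noncomputable def sampleMean {E : Type*} [AddCommGroup E] [Module ℝ E] (x : ℕ → E) (t : ℕ) : E :=
  ((t : ℝ) + 1)⁻¹ • ∑ a ∈ Finset.range (t + 1), x a

section SampleMean

variable {E : Type*} [AddCommGroup E] [Module ℝ E]

theorem sampleMean_succ (x : ℕ → E) (t : ℕ) :
    sampleMean x (t + 1) =
      (1 - ((t : ℝ) + 2)⁻¹) • sampleMean x t + ((t : ℝ) + 2)⁻¹ • x (t + 1) := by
  have h : (1 - ((t : ℝ) + 2)⁻¹) * ((t : ℝ) + 1)⁻¹ = ((t : ℝ) + 2)⁻¹ := by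
    field_simp; ring
  rw [sampleMean, sampleMean, Finset.sum_range_succ, smul_add, smul_smul, h]
  push_cast
  ring_nf

theorem sampleMean_eq_smul_sum {Ω : Type*} (X : ℕ → Ω → E) (t : ℕ) :
    (fun ω => sampleMean (X · ω) t) = ((t : ℝ) + 1)⁻¹ • ∑ a ∈ Finset.range (t + 1), X a := by
  ext ω
  simp [sampleMean, Finset.sum_apply]

theorem sampleMean_apply {ι : Type*} (x : ℕ → ι → ℝ) (t : ℕ) (i : ι) :
    sampleMean x t i = sampleMean (x · i) t := by
  simp [sampleMean, Finset.sum_apply]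

end SampleMean

section Kalman

variable {n : Type*} [Fintype n] [DecidableEq n] {S : Matrix n n ℝ}

theorem smul_mul_inv_smul_add_self (hS : IsUnit S.det) {c : ℝ} (hc : 0 ≤ c) :
    (c • S) * (c • S + S)⁻¹ = (c / (c + 1)) • 1 := by
  let := invertibleOfNonzero (show c + 1 ≠ 0 by positivity)
  rw [show c • S + S = (c + 1) • S by rw [add_smul, one_smul], Matrix.inv_smul _ _ hS, invOf_eq_inv,
    smul_mul_smul_comm, mul_nonsing_inv _ hS]
  simp [div_eq_mul_inv]

variable {P K : ℕ → Matrix n n ℝ} (hS : IsUnit S.det) (hP0 : P 0 = S)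
  (hK : ∀ t, K (t + 1) = P t * (P t + S)⁻¹) (hP : ∀ t, P (t + 1) = (1 - K (t + 1)) * P t)
include hS hK

theorem kalmanGain_eq_of_covariance_eq {t : ℕ} (hPt : P t = ((t : ℝ) + 1)⁻¹ • S) :
    K (t + 1) = ((t : ℝ) + 2)⁻¹ • 1 := by
  rw [hK, hPt, smul_mul_inv_smul_add_self hS (by positivity)]
  congr 1
  field_simp
  ring

include hP0 hP in
theorem kalmanCovariance_eq (t : ℕ) : P t = ((t : ℝ) + 1)⁻¹ • S := by
  induction t with
  | zero => simp [hP0]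
  | succ t ih =>
    rw [hP, kalmanGain_eq_of_covariance_eq hS hK ih, ih, sub_mul, one_mul, smul_mul_assoc,
      one_mul, smul_smul, ← sub_smul]
    congr 1
    push_cast
    field_simp
    ring

include hP0 hP in
theorem kalmanGain_eq (t : ℕ) : K (t + 1) = ((t : ℝ) + 2)⁻¹ • 1 :=
  kalmanGain_eq_of_covariance_eq hS hK (kalmanCovariance_eq hS hP0 hK hP t)

end Kalman

theorem kalmanMean_eq {n : Type*} [Fintype n] [DecidableEq n] {H : Matrix n n ℝ}
    {K : ℕ → Matrix n n ℝ} (hK : ∀ t, K (t + 1) = ((t : ℝ) + 2)⁻¹ • 1)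
    {θ x m : ℕ → n → ℝ} (hm0 : m 0 = H *ᵥ (θ 0 - x 0))
    (hm : ∀ t, m (t + 1) = (1 - K (t + 1)) *ᵥ (m t + H *ᵥ (θ (t + 1) - θ t)) +
      K (t + 1) *ᵥ (H *ᵥ (θ (t + 1) - x (t + 1)))) (t : ℕ) :
    m t = H *ᵥ (θ t - sampleMean x t) := by
  induction t with
  | zero => simp [hm0, sampleMean]
  | succ t ih =>
    rw [hm, hK, ih, sampleMean_succ]
    simp only [sub_mulVec, smul_mulVec, one_mulVec]
    simp only [← mulVec_add, ← mulVec_smul, ← mulVec_sub]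
    congr 1
    module

section LinearRecursion

variable {Ω E : Type*} [MeasurableSpace Ω] {μ : Measure Ω} [NormedAddCommGroup E]
  [NormedSpace ℝ E] {A B : E →L[ℝ] E} {e δ : ℕ → Ω → E}
  (hrec : ∀ t ω, e (t + 1) ω = A (e t ω) + B (δ t ω))
include hrec

theorem memLp_of_linear_recursion (he0 : MemLp (e 0) 2 μ) (hδ : ∀ t, MemLp (δ t) 2 μ) (t : ℕ) :
    MemLp (e t) 2 μ := by
  induction t with
  | zero => exact he0
  | succ t ih =>
    rw [show e (t + 1) = fun ω => A (e t ω) + B (δ t ω) from funext (hrec t)]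
    exact (A.comp_memLp' ih).add (B.comp_memLp' (hδ t))

omit [MeasurableSpace Ω] in
theorem norm_sq_succ_le_of_linear_recursion {r b : ℝ} (hr0 : 0 ≤ r) (hr1 : r < 1)
    (hA : ‖A‖ ≤ r) (hB : ‖B‖ ≤ b) (t : ℕ) (ω : Ω) :
    ‖e (t + 1) ω‖ ^ 2 ≤ r * ‖e t ω‖ ^ 2 + b ^ 2 / (1 - r) * ‖δ t ω‖ ^ 2 := by
  have hb : 0 ≤ b := (norm_nonneg B).trans hB
  have hnorm : ‖e (t + 1) ω‖ ≤ r * ‖e t ω‖ + b * ‖δ t ω‖ := by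
    rw [hrec]
    calc ‖A (e t ω) + B (δ t ω)‖ ≤ ‖A‖ * ‖e t ω‖ + ‖B‖ * ‖δ t ω‖ :=
          (norm_add_le _ _).trans (add_le_add (A.le_opNorm _) (B.le_opNorm _))
      _ ≤ r * ‖e t ω‖ + b * ‖δ t ω‖ := by gcongr
  calc ‖e (t + 1) ω‖ ^ 2 ≤ (r * ‖e t ω‖ + b * ‖δ t ω‖) ^ 2 := by gcongr
    _ ≤ r * ‖e t ω‖ ^ 2 + (b * ‖δ t ω‖) ^ 2 / (1 - r) := sq_mul_add_le hr0 hr1 _ _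
    _ = r * ‖e t ω‖ ^ 2 + b ^ 2 / (1 - r) * ‖δ t ω‖ ^ 2 := by ring

theorem integral_norm_sq_le_div_of_linear_recursion {r b σ2 : ℝ} (hr0 : 0 ≤ r) (hr1 : r < 1)
    (hA : ‖A‖ ≤ r) (hB : ‖B‖ ≤ b) (he0 : MemLp (e 0) 2 μ) (hδ : ∀ t, MemLp (δ t) 2 μ)
    (hσ : ∀ t, ∫ ω, ‖δ t ω‖ ^ 2 ∂μ ≤ σ2 / ((t : ℝ) + 1)) :
    ∃ C, 0 ≤ C ∧ ∀ t, 1 ≤ t → ∫ ω, ‖e t ω‖ ^ 2 ∂μ ≤ C / t := by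
  have hint (t : ℕ) : Integrable (fun ω => ‖e t ω‖ ^ 2) μ :=
    (memLp_of_linear_recursion hrec he0 hδ t).integrable_norm_pow two_ne_zero
  have hσ2 : 0 ≤ σ2 := by simpa using (integral_nonneg fun ω => sq_nonneg ‖δ 0 ω‖).trans (hσ 0)
  have hc : 0 ≤ b ^ 2 / (1 - r) := div_nonneg (sq_nonneg b) (by linarith)
  have hY0 : 0 ≤ ∫ ω, ‖e 0 ω‖ ^ 2 ∂μ := integral_nonneg fun ω => sq_nonneg _
  refine ⟨_, by positivity, fun t ht => le_div_of_le_mul_add_div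
    (Y := fun t => ∫ ω, ‖e t ω‖ ^ 2 ∂μ) hr0 hr1 (mul_nonneg hc hσ2) hY0 (fun t => ?_) ht⟩
  calc ∫ ω, ‖e (t + 1) ω‖ ^ 2 ∂μ
      ≤ ∫ ω, (r * ‖e t ω‖ ^ 2 + b ^ 2 / (1 - r) * ‖δ t ω‖ ^ 2) ∂μ :=
        integral_mono (hint (t + 1))
          (((hint t).const_mul r).add (((hδ t).integrable_norm_pow two_ne_zero).const_mul _))
          (norm_sq_succ_le_of_linear_recursion hrec hr0 hr1 hA hB t)
    _ = r * ∫ ω, ‖e t ω‖ ^ 2 ∂μ + b ^ 2 / (1 - r) * ∫ ω, ‖δ t ω‖ ^ 2 ∂μ := by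
        rw [integral_add ((hint t).const_mul r)
          (((hδ t).integrable_norm_pow two_ne_zero).const_mul _), integral_const_mul,
          integral_const_mul]
    _ ≤ r * ∫ ω, ‖e t ω‖ ^ 2 ∂μ + b ^ 2 / (1 - r) * σ2 / ((t : ℝ) + 1) := by
        rw [mul_div_assoc]; gcongr; exact hσ t

end LinearRecursion

section Moments

variable {Ω : Type*} [MeasurableSpace Ω] {μ : Measure Ω}

theorem memLp_sampleMean {E : Type*} [NormedAddCommGroup E] [NormedSpace ℝ E]
    {p : ENNReal} {X : ℕ → Ω → E} (hX : ∀ a, MemLp (X a) p μ) (t : ℕ) :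
    MemLp (fun ω => sampleMean (X · ω) t) p μ := by
  rw [sampleMean_eq_smul_sum]
  exact (memLp_finsetSum' _ fun a _ => hX a).const_smul _

variable {X : ℕ → Ω → ℝ} (hX : ∀ a, MemLp (X a) 2 μ)
  (hid : ∀ a, IdentDistrib (X a) (X 0) μ μ)
include hX hid

theorem integral_sampleMean [IsFiniteMeasure μ] (t : ℕ) :
    ∫ ω, sampleMean (X · ω) t ∂μ = ∫ ω, X 0 ω ∂μ := by
  simp only [sampleMean, smul_eq_mul]
  rw [integral_const_mul, integral_finsetSum _ fun a _ => (hX a).integrable one_le_two]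
  simp_rw [fun a => (hid a).integral_eq]
  rw [Finset.sum_const, Finset.card_range, nsmul_eq_mul, ← mul_assoc]
  push_cast
  field_simp

theorem variance_sampleMean (hind : Pairwise fun a b => IndepFun (X a) (X b) μ) (t : ℕ) :
    Var[fun ω => sampleMean (X · ω) t; μ] = Var[X 0; μ] / ((t : ℝ) + 1) := by
  rw [sampleMean_eq_smul_sum, variance_smul,
    IndepFun.variance_sum (fun a _ => hX a) fun a _ b _ hab => hind hab]
  simp_rw [fun a => (hid a).variance_eq]
  rw [Finset.sum_const, Finset.card_range, nsmul_eq_mul]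
  push_cast
  field_simp

theorem integral_sampleMean_sub_sq [IsFiniteMeasure μ]
    (hind : Pairwise fun a b => IndepFun (X a) (X b) μ) (t : ℕ) :
    ∫ ω, (sampleMean (X · ω) t - ∫ ω', X 0 ω' ∂μ) ^ 2 ∂μ = Var[X 0; μ] / ((t : ℝ) + 1) := by
  rw [← variance_sampleMean hX hid hind, ← integral_sampleMean hX hid t,
    variance_eq_integral (memLp_sampleMean hX t).aemeasurable]

omit hX hid in
theorem integral_norm_sq_sampleMean_sub {n : Type*} [Fintype n] [IsFiniteMeasure μ]
    {ξ : ℕ → Ω → n → ℝ} (hξ : ∀ a, MemLp (ξ a) 2 μ) (hid : ∀ a, IdentDistrib (ξ a) (ξ 0) μ μ)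
    (hind : Pairwise fun a b => IndepFun (ξ a) (ξ b) μ) {m : n → ℝ}
    (hm : ∀ i, m i = ∫ ω, ξ 0 ω i ∂μ) (t : ℕ) :
    ∫ ω, ‖WithLp.toLp 2 (sampleMean (ξ · ω) t - m)‖ ^ 2 ∂μ =
      (∑ i, Var[fun ω => ξ 0 ω i; μ]) / ((t : ℝ) + 1) := by
  have hcoord (i : n) : ∀ a, MemLp (fun ω => ξ a ω i) 2 μ := fun a => memLp_pi_iff.mp (hξ a) i
  simp only [EuclideanSpace.real_norm_sq_eq, Pi.sub_apply, sampleMean_apply]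
  rw [integral_finsetSum _ fun i _ => by
    exact ((memLp_sampleMean (hcoord i) t).sub (memLp_const (m i))).integrable_sq, Finset.sum_div]
  refine Finset.sum_congr rfl fun i _ => ?_
  rw [hm]
  exact integral_sampleMean_sub_sq (hcoord i) (fun a => (hid a).comp (measurable_pi_apply i))
    (fun a b hab => (hind hab).comp (measurable_pi_apply i) (measurable_pi_apply i)) t

end Moments

section Quadratic

variable {Ω : Type*} [MeasurableSpace Ω] {μ : Measure Ω} {n : Type*} [Fintype n]

theorem memLp_toLp_iff {p : ENNReal} {Y : Ω → n → ℝ} :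
    MemLp (fun ω => WithLp.toLp 2 (Y ω)) p μ ↔ MemLp Y p μ :=
  memLp_piLp_iff.trans memLp_pi_iff.symm

theorem integrable_dotProduct_mulVec {X : Ω → n → ℝ} (hX : MemLp X 2 μ) (B : Matrix n n ℝ) :
    Integrable (fun ω => X ω ⬝ᵥ B *ᵥ X ω) μ := by
  have hXi := memLp_pi_iff.mp hX
  have h : (fun ω => X ω ⬝ᵥ B *ᵥ X ω) = fun ω => ∑ i, ∑ j, B i j * (X ω i * X ω j) := by
    ext ω
    simp only [dotProduct, mulVec, Finset.mul_sum]
    exact Finset.sum_congr rfl fun i _ => Finset.sum_congr rfl fun j _ => by ring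
  rw [h]
  exact integrable_finsetSum _ fun i _ => integrable_finsetSum _ fun j _ =>
    ((hXi i).integrable_mul (hXi j)).const_mul _

theorem MeasureTheory.Integrable.const_dotProduct {Y : Ω → n → ℝ} (hY : Integrable Y μ)
    (w : n → ℝ) :
    Integrable (fun ω => w ⬝ᵥ Y ω) μ :=
  integrable_finsetSum _ fun i _ => (integrable_pi_iff.mp hY i).const_mul _

theorem integral_const_dotProduct {Y : Ω → n → ℝ} (hY : Integrable Y μ) (w : n → ℝ) :
    ∫ ω, w ⬝ᵥ Y ω ∂μ = w ⬝ᵥ fun i => ∫ ω, Y ω i ∂μ := by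
  simp only [dotProduct]
  rw [integral_finsetSum _ fun i _ => (integrable_pi_iff.mp hY i).const_mul _]
  simp_rw [integral_const_mul]

theorem integral_dotProduct_mulVec_le [DecidableEq n] {B : Matrix n n ℝ} {c : ℝ}
    (hc : (c • 1 - B).PosSemidef) {Z : Ω → n → ℝ} (hZ : MemLp Z 2 μ) :
    ∫ ω, Z ω ⬝ᵥ B *ᵥ Z ω ∂μ ≤ c * ∫ ω, ‖WithLp.toLp 2 (Z ω)‖ ^ 2 ∂μ := by
  rw [← integral_const_mul]
  refine integral_mono (integrable_dotProduct_mulVec hZ B)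
    (((memLp_toLp_iff.mpr hZ).integrable_norm_pow two_ne_zero).const_mul c) fun ω => ?_
  simp only [norm_toLp_sq]
  exact hc.dotProduct_mulVec_le (Z ω)

variable [IsProbabilityMeasure μ] {B : Matrix n n ℝ} {X : Ω → n → ℝ} (hX : MemLp X 2 μ)
  {m : n → ℝ} (hm : ∀ i, m i = ∫ ω, X ω i ∂μ)
include hX hm

theorem integral_half_quadForm_sub (hB : B.IsSymm) (v : n → ℝ) :
    ∫ ω, (1 / 2 : ℝ) * ((v - X ω) ⬝ᵥ B *ᵥ (v - X ω)) ∂μ =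
      (1 / 2 : ℝ) * ((v - m) ⬝ᵥ B *ᵥ (v - m)) +
        ∫ ω, (1 / 2 : ℝ) * ((m - X ω) ⬝ᵥ B *ᵥ (m - X ω)) ∂μ := by
  have hsplit (ω : Ω) : (1 / 2 : ℝ) * ((v - X ω) ⬝ᵥ B *ᵥ (v - X ω)) =
      ((1 / 2 : ℝ) * ((v - m) ⬝ᵥ B *ᵥ (v - m)) + ((v - m) ᵥ* B) ⬝ᵥ (m - X ω)) +
        (1 / 2 : ℝ) * ((m - X ω) ⬝ᵥ B *ᵥ (m - X ω)) := by
    have hcross : (m - X ω) ⬝ᵥ B *ᵥ (v - m) = (v - m) ⬝ᵥ B *ᵥ (m - X ω) := by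
      rw [dotProduct_mulVec, ← mulVec_transpose, hB.eq, dotProduct_comm]
    rw [show v - X ω = (v - m) + (m - X ω) by abel, mulVec_add, dotProduct_add, add_dotProduct,
      add_dotProduct, hcross, ← dotProduct_mulVec]
    ring
  have hmX : MemLp (fun ω => m - X ω) 2 μ := (memLp_const m).sub hX
  have hmX1 := hmX.integrable one_le_two
  have hmean : (fun i => ∫ ω, (m - X ω) i ∂μ) = 0 := by
    ext i
    simp only [Pi.sub_apply, Pi.zero_apply]
    rw [integral_sub (integrable_const _) (integrable_pi_iff.mp (hX.integrable one_le_two) i),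
      integral_const, hm]
    simp
  simp_rw [hsplit]
  rw [integral_add (by exact (integrable_const _).add (hmX1.const_dotProduct _))
      (by exact (integrable_dotProduct_mulVec hmX B).const_mul _),
    integral_add (integrable_const _) (hmX1.const_dotProduct _), integral_const,
    integral_const_dotProduct hmX1, hmean]
  simp

theorem iInf_integral_half_quadForm_sub (hB : B.PosSemidef) :
    ⨅ u, ∫ ω, (1 / 2 : ℝ) * ((u - X ω) ⬝ᵥ B *ᵥ (u - X ω)) ∂μ =
      ∫ ω, (1 / 2 : ℝ) * ((m - X ω) ⬝ᵥ B *ᵥ (m - X ω)) ∂μ := by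
  have hsplit := integral_half_quadForm_sub hX hm (isHermitian_iff_isSymm.mp hB.isHermitian)
  have hge (u : n → ℝ) : ∫ ω, (1 / 2 : ℝ) * ((m - X ω) ⬝ᵥ B *ᵥ (m - X ω)) ∂μ ≤
      ∫ ω, (1 / 2 : ℝ) * ((u - X ω) ⬝ᵥ B *ᵥ (u - X ω)) ∂μ := by
    have := hB.dotProduct_mulVec_nonneg (u - m)
    rw [star_trivial] at this
    rw [hsplit u]
    linarith
  exact le_antisymm (ciInf_le ⟨_, Set.forall_mem_range.mpr hge⟩ m) (le_ciInf hge)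

theorem integral_sub_iInf_integral_half_quadForm_sub (hB : B.PosSemidef) {Y : Ω → n → ℝ}
    (hY : MemLp Y 2 μ) :
    (∫ ω, ∫ ω', (1 / 2 : ℝ) * ((Y ω - X ω') ⬝ᵥ B *ᵥ (Y ω - X ω')) ∂μ ∂μ) -
        ⨅ u, ∫ ω', (1 / 2 : ℝ) * ((u - X ω') ⬝ᵥ B *ᵥ (u - X ω')) ∂μ =
      ∫ ω, (1 / 2 : ℝ) * ((Y ω - m) ⬝ᵥ B *ᵥ (Y ω - m)) ∂μ := by
  have hsplit : (fun ω => ∫ ω', (1 / 2 : ℝ) * ((Y ω - X ω') ⬝ᵥ B *ᵥ (Y ω - X ω')) ∂μ) =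
      fun ω => (1 / 2 : ℝ) * ((Y ω - m) ⬝ᵥ B *ᵥ (Y ω - m)) +
        ∫ ω', (1 / 2 : ℝ) * ((m - X ω') ⬝ᵥ B *ᵥ (m - X ω')) ∂μ :=
    funext fun ω => integral_half_quadForm_sub hX hm (isHermitian_iff_isSymm.mp hB.isHermitian) _
  rw [hsplit, iInf_integral_half_quadForm_sub hX hm hB,
    integral_add (by exact (integrable_dotProduct_mulVec (hY.sub (memLp_const m)) B).const_mul _)
      (integrable_const _), integral_const]
  simp

end Quadratic

theorem toLp_sub_succ_eq_of_averaged_gradient_step {n : Type*} [Fintype n] [DecidableEq n]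
    {H : Matrix n n ℝ} {α : ℝ} {θ x : ℕ → n → ℝ} (xbar : n → ℝ)
    (hθ : ∀ t, θ (t + 1) = θ t - α • H *ᵥ (θ t - sampleMean x t)) (t : ℕ) :
    WithLp.toLp 2 (θ (t + 1) - xbar) =
      toEuclideanCLM (n := n) (𝕜 := ℝ) (1 - α • H) (WithLp.toLp 2 (θ t - xbar)) +
        toEuclideanCLM (𝕜 := ℝ) (α • H) (WithLp.toLp 2 (sampleMean x t - xbar)) := by
  rw [toEuclideanCLM_toLp, toEuclideanCLM_toLp, ← WithLp.toLp_add, hθ]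
  congr 1
  simp only [sub_mulVec, one_mulVec, smul_mulVec, mulVec_sub]
  module

theorem averagedGradientDescent_integral_norm_sq_le {n : Type*} [Fintype n] [DecidableEq n]
    {Ω : Type*} [MeasurableSpace Ω] {μ : Measure Ω} [IsProbabilityMeasure μ]
    {H : Matrix n n ℝ} {mu L α : ℝ} (hmu : 0 < mu) (hmuL : mu ≤ L)
    (hHlb : (H - mu • 1).PosSemidef) (hHub : (L • 1 - H).PosSemidef) (hα0 : 0 < α)
    (hαL : α * L ≤ 1) {ξ : ℕ → Ω → n → ℝ} (hξ : ∀ a, MemLp (ξ a) 2 μ)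
    (hid : ∀ a, IdentDistrib (ξ a) (ξ 0) μ μ) (hind : Pairwise fun a b => IndepFun (ξ a) (ξ b) μ)
    {xbar : n → ℝ} (hxbar : ∀ i, xbar i = ∫ ω, ξ 0 ω i ∂μ) {θ : ℕ → Ω → n → ℝ} {θ₀ : n → ℝ}
    (hθ0 : ∀ ω, θ 0 ω = θ₀)
    (hθ : ∀ t ω, θ (t + 1) ω = θ t ω - α • H *ᵥ (θ t ω - sampleMean (ξ · ω) t)) :
    (∀ t, MemLp (θ t) 2 μ) ∧
      ∃ C, 0 ≤ C ∧ ∀ t, 1 ≤ t → ∫ ω, ‖WithLp.toLp 2 (θ t ω - xbar)‖ ^ 2 ∂μ ≤ C / t := by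
  let e (t : ℕ) (ω : Ω) := WithLp.toLp 2 (θ t ω - xbar)
  let δ (t : ℕ) (ω : Ω) := WithLp.toLp 2 (sampleMean (ξ · ω) t - xbar)
  have hrec (t : ℕ) (ω : Ω) : e (t + 1) ω =
      toEuclideanCLM (n := n) (𝕜 := ℝ) (1 - α • H) (e t ω) +
        toEuclideanCLM (𝕜 := ℝ) (α • H) (δ t ω) :=
    toLp_sub_succ_eq_of_averaged_gradient_step (θ := (θ · ω)) (x := (ξ · ω)) xbar
      (fun t => hθ t ω) t
  have hδ (t : ℕ) : MemLp (δ t) 2 μ :=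
    memLp_toLp_iff.mpr ((memLp_sampleMean hξ t).sub (memLp_const xbar))
  have he0 : MemLp (e 0) 2 μ := by simp only [e, hθ0]; exact memLp_const _
  refine ⟨fun t => ?_, integral_norm_sq_le_div_of_linear_recursion hrec (by nlinarith)
    (by nlinarith) (norm_toEuclideanCLM_one_sub_smul_le hHlb hHub hmuL hα0.le hαL)
    (norm_toEuclideanCLM_smul_le (hHlb.of_sub_smul_one hmu.le) hHub (by linarith) hα0.le) he0 hδ
    fun t => (integral_norm_sq_sampleMean_sub hξ hid hind hxbar t).le⟩
  simpa [Pi.add_def] using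
    (memLp_toLp_iff.mp (memLp_of_linear_recursion hrec he0 hδ t)).add (memLp_const xbar)

theorem meka_noisy_quadratic_convergence_general
    {d : ℕ} (H : Matrix (Fin d) (Fin d) ℝ)
    (mu L : ℝ) (hmu : 0 < mu) (hmuL : mu ≤ L)
    (hHlb : (H - mu • (1 : Matrix (Fin d) (Fin d) ℝ)).PosSemidef)
    (hHub : ((L • (1 : Matrix (Fin d) (Fin d) ℝ)) - H).PosSemidef)
    {Ω : Type*} [MeasurableSpace Ω] (μ : Measure Ω) [IsProbabilityMeasure μ]
    (ξ : ℕ → Ω → Fin d → ℝ) (hmeas : ∀ t, Measurable (ξ t))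
    (hindep : iIndepFun ξ μ)
    (hident : ∀ t, Measure.map (ξ t) μ = Measure.map (ξ 0) μ)
    (hL2 : ∀ t i, MemLp (fun ω => ξ t ω i) 2 μ)
    (xbar : Fin d → ℝ) (hxbar : ∀ i, xbar i = ∫ ω, ξ 0 ω i ∂μ)
    (S : Matrix (Fin d) (Fin d) ℝ) (hSpd : S.PosDef)
    -- iterates, stochastic gradients, and the filter recursion
    (α : ℝ) (hα0 : 0 < α) (hα : α ≤ 1 / L)
    (θ : ℕ → Ω → Fin d → ℝ) (θ₀ : Fin d → ℝ) (hθ0 : ∀ ω, θ 0 ω = θ₀)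
    (g : ℕ → Ω → Fin d → ℝ) (hg : ∀ t ω, g t ω = H.mulVec (θ t ω - ξ t ω))
    (m : ℕ → Ω → Fin d → ℝ) (P K : ℕ → Matrix (Fin d) (Fin d) ℝ)
    (hm0 : ∀ ω, m 0 ω = g 0 ω) (hP0 : P 0 = S)
    (hK : ∀ t : ℕ, K (t + 1) = P t * (P t + S)⁻¹)
    (hm : ∀ (t : ℕ) ω, m (t + 1) ω =
      (1 - K (t + 1)).mulVec (m t ω + H.mulVec (θ (t + 1) ω - θ t ω)) +
        (K (t + 1)).mulVec (g (t + 1) ω))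
    (hP : ∀ t : ℕ, P (t + 1) = (1 - K (t + 1)) * P t)
    (hθ : ∀ (t : ℕ) ω, θ (t + 1) ω = θ t ω - α • m t ω)
    -- the full objective and its infimum
    (F : (Fin d → ℝ) → ℝ)
    (hF : ∀ v, F v = ∫ ω, (1 / 2 : ℝ) * ((v - ξ 0 ω) ⬝ᵥ H.mulVec (v - ξ 0 ω)) ∂μ)
    (fstar : ℝ) (hfstar : fstar = ⨅ v : Fin d → ℝ, F v) :
    ∃ M : ℝ, 0 < M ∧ ∀ t : ℕ, 1 ≤ t →
      (∫ ω, F (θ t ω) ∂μ) - fstar ≤ M / (t : ℝ) := by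
  have hL : 0 < L := hmu.trans_le hmuL
  have hαL : α * L ≤ 1 := by rwa [le_div_iff₀ hL] at hα
  have hξ (a : ℕ) : MemLp (ξ a) 2 μ := memLp_pi_iff.mpr (hL2 a)
  have hgain := kalmanGain_eq hSpd.det_pos.ne'.isUnit hP0 hK hP
  have hmean (ω : Ω) (t : ℕ) : m t ω = H *ᵥ (θ t ω - sampleMean (ξ · ω) t) :=
    kalmanMean_eq (θ := (θ · ω)) (x := (ξ · ω)) (m := (m · ω)) hgain (by rw [hm0, hg])
      (fun t => by rw [hm, hg]) t
  obtain ⟨hθL2, C, hC, hbound⟩ := averagedGradientDescent_integral_norm_sq_le hmu hmuL hHlb hHub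
    hα0 hαL hξ (fun a => ⟨(hmeas a).aemeasurable, (hmeas 0).aemeasurable, hident a⟩)
    (fun a b hab => hindep.indepFun hab) hxbar hθ0 fun t ω => by rw [hθ, hmean]
  refine ⟨L / 2 * C + 1, by positivity, fun t ht => ?_⟩
  simp only [hfstar, hF]
  rw [integral_sub_iInf_integral_half_quadForm_sub (hξ 0) hxbar (hHlb.of_sub_smul_one hmu.le)
    (hθL2 t), integral_const_mul]
  calc 1 / 2 * ∫ ω, (θ t ω - xbar) ⬝ᵥ H *ᵥ (θ t ω - xbar) ∂μ
      ≤ 1 / 2 * (L * ∫ ω, ‖WithLp.toLp 2 (θ t ω - xbar)‖ ^ 2 ∂μ) := by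
        gcongr; exact integral_dotProduct_mulVec_le hHub ((hθL2 t).sub (memLp_const xbar))
    _ ≤ 1 / 2 * (L * (C / t)) := by gcongr; exact hbound t ht
    _ ≤ (L / 2 * C + 1) / t := by
        rw [← mul_div_assoc, ← mul_div_assoc]; gcongr; linarith

/-- Proposition 1: for the noisy quadratic problem `f(θ, ξ) = ½ (θ-ξ)ᵀ H (θ-ξ)` with
`μI ⪯ H ⪯ LI`, i.i.d. square-integrable locations `ξ t` and positive definite noise
covariance `Σ = H C Hᵀ`, the iterates `θ (t+1) = θ t - α • m t` with constant step size
`0 < α ≤ 1/L` and Kalman-filtered gradients `m t` satisfy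
`𝔼[f(θ t) - f⋆] ≤ M / t` for some `M > 0` and all `t ≥ 1`, i.e. `O(1/t)` convergence. -/
theorem meka_noisy_quadratic_convergence
    {d : ℕ} (H : Matrix (Fin d) (Fin d) ℝ) (hH : H.IsSymm)
    (mu L : ℝ) (hmu : 0 < mu) (hmuL : mu ≤ L)
    (hHlb : (H - mu • (1 : Matrix (Fin d) (Fin d) ℝ)).PosSemidef)
    (hHub : ((L • (1 : Matrix (Fin d) (Fin d) ℝ)) - H).PosSemidef)
    {Ω : Type*} [MeasurableSpace Ω] (μ : Measure Ω) [IsProbabilityMeasure μ]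
    (ξ : ℕ → Ω → Fin d → ℝ) (hmeas : ∀ t, Measurable (ξ t))
    (hindep : iIndepFun ξ μ)
    (hident : ∀ t, Measure.map (ξ t) μ = Measure.map (ξ 0) μ)
    (hL2 : ∀ t i, MemLp (fun ω => ξ t ω i) 2 μ)
    (xbar : Fin d → ℝ) (hxbar : ∀ i, xbar i = ∫ ω, ξ 0 ω i ∂μ)
    (C : Matrix (Fin d) (Fin d) ℝ)
    (hC : ∀ i j, C i j = ∫ ω, (ξ 0 ω i - xbar i) * (ξ 0 ω j - xbar j) ∂μ)
    (S : Matrix (Fin d) (Fin d) ℝ) (hS : S = H * C * Hᵀ) (hSpd : S.PosDef)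
    -- iterates, stochastic gradients, and the filter recursion
    (α : ℝ) (hα0 : 0 < α) (hα : α ≤ 1 / L)
    (θ : ℕ → Ω → Fin d → ℝ) (θ₀ : Fin d → ℝ) (hθ0 : ∀ ω, θ 0 ω = θ₀)
    (g : ℕ → Ω → Fin d → ℝ) (hg : ∀ t ω, g t ω = H.mulVec (θ t ω - ξ t ω))
    (m : ℕ → Ω → Fin d → ℝ) (P K : ℕ → Matrix (Fin d) (Fin d) ℝ)
    (hm0 : ∀ ω, m 0 ω = g 0 ω) (hP0 : P 0 = S)
    (hK : ∀ t : ℕ, K (t + 1) = P t * (P t + S)⁻¹)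
    (hm : ∀ (t : ℕ) ω, m (t + 1) ω =
      (1 - K (t + 1)).mulVec (m t ω + H.mulVec (θ (t + 1) ω - θ t ω)) +
        (K (t + 1)).mulVec (g (t + 1) ω))
    (hP : ∀ t : ℕ, P (t + 1) = (1 - K (t + 1)) * P t)
    (hθ : ∀ (t : ℕ) ω, θ (t + 1) ω = θ t ω - α • m t ω)
    -- the full objective and its infimum
    (F : (Fin d → ℝ) → ℝ)
    (hF : ∀ v, F v = ∫ ω, (1 / 2 : ℝ) * ((v - ξ 0 ω) ⬝ᵥ H.mulVec (v - ξ 0 ω)) ∂μ)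
    (fstar : ℝ) (hfstar : fstar = ⨅ v : Fin d → ℝ, F v) :
    ∃ M : ℝ, 0 < M ∧ ∀ t : ℕ, 1 ≤ t →
      (∫ ω, F (θ t ω) ∂μ) - fstar ≤ M / (t : ℝ) :=
  meka_noisy_quadratic_convergence_general H mu L hmu hmuL hHlb hHub μ ξ hmeas hindep hident hL2
    xbar hxbar S hSpd α hα0 hα θ θ₀ hθ0 g hg m P K hm0 hP0 hK hm hP hθ F hF fstar hfstar
end

section
/- Let $a > 0$, $b > 0$, $r > 0$ and $p, q \geq 0$. The function $g : (0, \infty) \to \mathbb{R}$ defined by $g(\alpha) = \dfrac{-a\alpha + \frac{b}{2}\alpha^2}{\sqrt{r + p\alpha^2 + \frac{q}{4}\alpha^4}}$ has exactly one local (hence global) minimizer on $(0, \infty)$, at which $g$ takes a strictly negative value. -/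
/-!
Writing `g = N / √u` with `N α = -aα + (b/2)α²` and `u α = r + pα² + (q/4)α⁴`, one finds
`g' = F / (√u)³` where `2F = 2N'u - Nu'`, i.e. `F α = -ar + brα + (bp/2)α³ + (aq/4)α⁴`.
The quartic `F` is strictly increasing on `[0, ∞)`, negative at `0` and nonnegative at `a/b`,
so it has exactly one positive root `α₀`. Hence `g` strictly decreases on `(0, α₀]` and
strictly increases on `[α₀, ∞)`, which makes `α₀` the only local minimizer, and
`g α₀ ≤ g (a/b) < 0`.
-/

open Set Filter Topology

theorem isMinOn_Ioi_of_strictAntiOn_of_strictMonoOn {α β : Type*} [LinearOrder α] [Preorder β]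
    {f : α → β} {c x₀ : α} (hanti : StrictAntiOn f (Ioc c x₀))
    (hmono : StrictMonoOn f (Ici x₀)) : IsMinOn f (Ioi c) x₀ := by
  intro x (hx : c < x)
  rcases lt_or_ge x x₀ with h | h
  · exact (hanti ⟨hx, h.le⟩ ⟨hx.trans h, le_rfl⟩ h).le
  · exact hmono.monotoneOn self_mem_Ici h h

section LocalMin

variable {α β : Type*} [LinearOrder α] [TopologicalSpace α] [OrderTopology α]
  [DenselyOrdered α] [Preorder β] {f : α → β} {s : Set α} {c x₀ : α}

theorem not_isLocalMinOn_of_strictAntiOn_Icc {a b : α} (hab : a < b) (hs : Icc a b ⊆ s)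
    (hf : StrictAntiOn f (Icc a b)) : ¬IsLocalMinOn f s a := by
  intro hmin
  have : (𝓝[Ioo a b] a).NeBot := left_nhdsWithin_Ioo_neBot hab
  obtain ⟨x, hfx, hx⟩ :=
    ((hmin.filter_mono (nhdsWithin_mono a (Ioo_subset_Icc_self.trans hs))).and
      self_mem_nhdsWithin).exists
  exact (hf (left_mem_Icc.2 hab.le) (Ioo_subset_Icc_self hx) hx.1).not_ge hfx

theorem not_isLocalMinOn_of_strictMonoOn_Icc {a b : α} (hab : a < b) (hs : Icc a b ⊆ s)
    (hf : StrictMonoOn f (Icc a b)) : ¬IsLocalMinOn f s b := by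
  intro hmin
  have : (𝓝[Ioo a b] b).NeBot := right_nhdsWithin_Ioo_neBot hab
  obtain ⟨x, hfx, hx⟩ :=
    ((hmin.filter_mono (nhdsWithin_mono b (Ioo_subset_Icc_self.trans hs))).and
      self_mem_nhdsWithin).exists
  exact (hf (Ioo_subset_Icc_self hx) (right_mem_Icc.2 hab.le) hx.2).not_ge hfx

theorem eq_of_isLocalMinOn_Ioi_of_strictAntiOn_of_strictMonoOn (hc : c < x₀)
    (hanti : StrictAntiOn f (Ioc c x₀)) (hmono : StrictMonoOn f (Ici x₀)) {x : α}
    (hx : x ∈ Ioi c) (hmin : IsLocalMinOn f (Ioi c) x) : x = x₀ := by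
  by_contra hne
  rcases lt_or_gt_of_ne hne with h | h
  · exact not_isLocalMinOn_of_strictAntiOn_Icc h (fun y hy => hx.trans_le hy.1)
      (hanti.mono fun y hy => ⟨hx.trans_le hy.1, hy.2⟩) hmin
  · exact not_isLocalMinOn_of_strictMonoOn_Icc h (fun y hy => hc.trans_le hy.1)
      (hmono.mono Icc_subset_Ici_self) hmin

end LocalMin

theorem HasDerivAt.div_sqrt {N u : ℝ → ℝ} {N' u' x : ℝ} (hN : HasDerivAt N N' x)
    (hu : HasDerivAt u u' x) (hux : 0 < u x) :
    HasDerivAt (fun y => N y / √(u y)) ((2 * N' * u x - N x * u') / (2 * √(u x) ^ 3)) x := by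
  refine (hN.div (hu.sqrt hux.ne') (Real.sqrt_pos.2 hux).ne').congr_deriv ?_
  have hsq := Real.sq_sqrt hux.le
  field_simp
  linear_combination 2 * N' * hsq

namespace PIStepSize

variable {a b r p q : ℝ}

noncomputable def objective (a b r p q α : ℝ) : ℝ :=
  (-a * α + b / 2 * α ^ 2) / Real.sqrt (r + p * α ^ 2 + q / 4 * α ^ 4)

noncomputable def derivNumerator (a b r p q α : ℝ) : ℝ :=
  -(a * r) + b * r * α + b * p / 2 * α ^ 3 + a * q / 4 * α ^ 4

theorem denominator_pos (hr : 0 < r) (hp : 0 ≤ p) (hq : 0 ≤ q) (α : ℝ) :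
    0 < r + p * α ^ 2 + q / 4 * α ^ 4 := by
  positivity

theorem hasDerivAt_objective (hr : 0 < r) (hp : 0 ≤ p) (hq : 0 ≤ q) (α : ℝ) :
    HasDerivAt (objective a b r p q)
      (derivNumerator a b r p q α / √(r + p * α ^ 2 + q / 4 * α ^ 4) ^ 3) α := by
  have hN : HasDerivAt (fun x => -a * x + b / 2 * x ^ 2) (-a + b * α) α :=
    (((hasDerivAt_id' α).const_mul (-a)).add ((hasDerivAt_pow 2 α).const_mul (b / 2))).congr_deriv
      (by norm_num; ring)
  have hu : HasDerivAt (fun x => r + p * x ^ 2 + q / 4 * x ^ 4) (2 * p * α + q * α ^ 3) α :=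
    (((hasDerivAt_pow 2 α).const_mul p).const_add r |>.add
      ((hasDerivAt_pow 4 α).const_mul (q / 4))).congr_deriv (by norm_num; ring)
  refine (hN.div_sqrt hu (denominator_pos hr hp hq α)).congr_deriv ?_
  unfold derivNumerator
  field_simp
  ring

theorem continuous_objective (hr : 0 < r) (hp : 0 ≤ p) (hq : 0 ≤ q) :
    Continuous (objective a b r p q) :=
  continuous_iff_continuousAt.2 fun α => (hasDerivAt_objective hr hp hq α).continuousAt

theorem strictMonoOn_derivNumerator (ha : 0 ≤ a) (hb : 0 < b) (hr : 0 < r) (hp : 0 ≤ p)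
    (hq : 0 ≤ q) : StrictMonoOn (derivNumerator a b r p q) (Ici 0) := by
  intro x (hx : 0 ≤ x) y _ hxy
  have h1 := mul_lt_mul_of_pos_left hxy (mul_pos hb hr)
  have h3 := mul_le_mul_of_nonneg_left (pow_le_pow_left₀ hx hxy.le 3)
    (by positivity : 0 ≤ b * p / 2)
  have h4 := mul_le_mul_of_nonneg_left (pow_le_pow_left₀ hx hxy.le 4)
    (by positivity : 0 ≤ a * q / 4)
  unfold derivNumerator
  linarith

theorem exists_pos_derivNumerator_eq_zero (ha : 0 < a) (hb : 0 < b) (hr : 0 < r) (hp : 0 ≤ p)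
    (hq : 0 ≤ q) : ∃ α₀, 0 < α₀ ∧ derivNumerator a b r p q α₀ = 0 := by
  have h0 : derivNumerator a b r p q 0 < 0 := by
    simp only [derivNumerator]
    nlinarith [mul_pos ha hr]
  have hab : 0 ≤ derivNumerator a b r p q (a / b) := by
    have h : derivNumerator a b r p q (a / b) =
        b * p / 2 * (a / b) ^ 3 + a * q / 4 * (a / b) ^ 4 := by
      unfold derivNumerator
      field_simp
      ring
    rw [h]
    positivity
  obtain ⟨α₀, hα₀, hF⟩ := intermediate_value_Icc (by positivity : (0 : ℝ) ≤ a / b)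
    (by unfold derivNumerator; fun_prop : Continuous (derivNumerator a b r p q)).continuousOn
    ⟨h0.le, hab⟩
  exact ⟨α₀, hα₀.1.lt_of_ne (by rintro rfl; exact h0.ne hF), hF⟩

theorem strictAntiOn_objective (ha : 0 ≤ a) (hb : 0 < b) (hr : 0 < r) (hp : 0 ≤ p)
    (hq : 0 ≤ q) {α₀ : ℝ} (hF : derivNumerator a b r p q α₀ = 0) :
    StrictAntiOn (objective a b r p q) (Ioc 0 α₀) := by
  refine strictAntiOn_of_deriv_neg (convex_Ioc 0 α₀)
    (continuous_objective hr hp hq).continuousOn fun x hx => ?_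
  rw [interior_Ioc] at hx
  rw [(hasDerivAt_objective hr hp hq x).deriv]
  refine div_neg_of_neg_of_pos ?_ (pow_pos (Real.sqrt_pos.2 (denominator_pos hr hp hq x)) 3)
  rw [← hF]
  exact strictMonoOn_derivNumerator ha hb hr hp hq hx.1.le (hx.1.trans hx.2).le hx.2

theorem strictMonoOn_objective (ha : 0 ≤ a) (hb : 0 < b) (hr : 0 < r) (hp : 0 ≤ p)
    (hq : 0 ≤ q) {α₀ : ℝ} (hα₀ : 0 ≤ α₀) (hF : derivNumerator a b r p q α₀ = 0) :
    StrictMonoOn (objective a b r p q) (Ici α₀) := by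
  refine strictMonoOn_of_deriv_pos (convex_Ici α₀)
    (continuous_objective hr hp hq).continuousOn fun x hx => ?_
  rw [interior_Ici] at hx
  rw [(hasDerivAt_objective hr hp hq x).deriv]
  refine div_pos ?_ (pow_pos (Real.sqrt_pos.2 (denominator_pos hr hp hq x)) 3)
  rw [← hF]
  exact strictMonoOn_derivNumerator ha hb hr hp hq hα₀ (hα₀.trans hx.le) hx

theorem objective_neg (hr : 0 < r) (hp : 0 ≤ p) (hq : 0 ≤ q) {α : ℝ} (hα : 0 < α)
    (hbα : b * α < 2 * a) : objective a b r p q α < 0 := by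
  refine div_neg_of_neg_of_pos ?_ (Real.sqrt_pos.2 (denominator_pos hr hp hq α))
  nlinarith

end PIStepSize

open PIStepSize in
/-- The probability-of-improvement step size objective
`g(α) = (-aα + (b/2)α²) / √(r + pα² + (q/4)α⁴)` with `a, b, r > 0` and `p, q ≥ 0`
has exactly one local minimizer on `(0, ∞)`; it is a global minimizer on `(0, ∞)`
and `g` is strictly negative there. -/
theorem pi_step_size_unique_minimizer
    (a b r p q : ℝ) (ha : 0 < a) (hb : 0 < b) (hr : 0 < r) (hp : 0 ≤ p) (hq : 0 ≤ q)
    (g : ℝ → ℝ)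
    (hg : ∀ α : ℝ, g α =
      (-a * α + b / 2 * α ^ 2) / Real.sqrt (r + p * α ^ 2 + q / 4 * α ^ 4)) :
    ∃ α₀ : ℝ, α₀ ∈ Set.Ioi (0 : ℝ) ∧ IsLocalMinOn g (Set.Ioi (0 : ℝ)) α₀ ∧
      (∀ α ∈ Set.Ioi (0 : ℝ), IsLocalMinOn g (Set.Ioi (0 : ℝ)) α → α = α₀) ∧
      (∀ α ∈ Set.Ioi (0 : ℝ), g α₀ ≤ g α) ∧
      g α₀ < 0 := by
  obtain rfl : g = objective a b r p q := funext hg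
  obtain ⟨α₀, hα₀, hF⟩ := exists_pos_derivNumerator_eq_zero ha hb hr hp hq
  have hanti := strictAntiOn_objective ha.le hb hr hp hq hF
  have hmono := strictMonoOn_objective ha.le hb hr hp hq hα₀.le hF
  have hmin : IsMinOn (objective a b r p q) (Ioi 0) α₀ :=
    isMinOn_Ioi_of_strictAntiOn_of_strictMonoOn hanti hmono
  have hab : 0 < a / b := div_pos ha hb
  refine ⟨α₀, hα₀, hmin.localize, fun α hα =>
    eq_of_isLocalMinOn_Ioi_of_strictAntiOn_of_strictMonoOn hα₀ hanti hmono hα, hmin, ?_⟩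
  refine (hmin hab).trans_lt (objective_neg hr hp hq hab ?_)
  rw [mul_div_cancel₀ a hb.ne']
  linarith
end

section
/- Let $a > 0$, $b \in \mathbb{R}$, $r > 0$, $p, q \geq 0$ and $q_6 > 0$. The function $g : [0, \infty) \to \mathbb{R}$ defined by $g(\alpha) = \dfrac{-a\alpha + \frac{b}{2}\alpha^2}{\sqrt{r + p\alpha^2 + \frac{q}{4}\alpha^4 + q_6\,\alpha^6}}$ satisfies $g(0) = 0$ and $\lim_{\alpha \to \infty} g(\alpha) = 0$, takes strictly negative values, and attains its infimum at some finite $\alpha^\ast \in (0, \infty)$ with $g(\alpha^\ast) < 0$. In particular, even when the curvature $b$ is negative, the probability-of-improvement step size is finite and positive. -/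
/-!
The numerator has degree 2 and the square root of the variance grows like `√q₆ α³`, so `g`
tends to `0` at infinity; near `0` the linear term `-a α` dominates, so `g` is negative
somewhere. A continuous function on `[0, ∞)` with a limit at infinity that it undercuts
attains its minimum, and that minimum is negative, hence not at `α = 0`.
-/

open Filter Set Topology

theorem exists_isMinOn_Ici_of_tendsto_atTop {α β : Type*} [LinearOrder α] [TopologicalSpace α]
    [OrderClosedTopology α] [CompactIccSpace α] [NoMinOrder α] [NoMaxOrder α]
    [LinearOrder β] [TopologicalSpace β] [OrderClosedTopology β]
    {f : α → β} {c x₀ : α} {L : β} (hf : ContinuousOn f (Ici c))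
    (hlim : Tendsto f atTop (𝓝 L)) (hx₀ : c ≤ x₀) (hfx₀ : f x₀ < L) :
    ∃ x, c ≤ x ∧ IsMinOn f (Ici c) x := by
  refine hf.exists_isMinOn' isClosed_Ici hx₀ ?_
  rw [cocompact_eq_atBot_atTop, inf_sup_right, eventually_sup]
  constructor
  · filter_upwards [(eventually_lt_atBot c).filter_mono inf_le_left,
      mem_inf_of_right (mem_principal_self (Ici c))] with x hlt hge
    exact absurd hge (not_le.2 hlt)
  · exact ((hlim.eventually_const_lt hfx₀).mono fun _ h => h.le).filter_mono inf_le_left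

theorem exists_pos_neg_mul_add_mul_sq {a : ℝ} (ha : 0 < a) (b : ℝ) :
    ∃ α > 0, -a * α + b / 2 * α ^ 2 < 0 := by
  have hlin : Tendsto (fun α : ℝ => -a + b / 2 * α) (𝓝 0) (𝓝 (-a)) := by
    have hcont : Continuous fun α : ℝ => -a + b / 2 * α := by fun_prop
    simpa using hcont.tendsto 0
  obtain ⟨α, hneg, hα⟩ := ((hlin.eventually (gt_mem_nhds (neg_neg_of_pos ha))).filter_mono
    nhdsWithin_le_nhds).and (self_mem_nhdsWithin (s := Ioi 0)) |>.exists
  refine ⟨α, hα, ?_⟩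
  have hfactor : -a * α + b / 2 * α ^ 2 = α * (-a + b / 2 * α) := by ring
  exact hfactor ▸ mul_neg_of_pos_of_neg hα hneg

theorem tendsto_div_sqrt_sixth_degree_atTop (a b r p q : ℝ) {q₆ : ℝ} (hq₆ : 0 < q₆) :
    Tendsto (fun α : ℝ => (-a * α + b / 2 * α ^ 2) /
      Real.sqrt (r + p * α ^ 2 + q / 4 * α ^ 4 + q₆ * α ^ 6)) atTop (𝓝 0) := by
  have hinv : ∀ n : ℕ, n ≠ 0 → Tendsto (fun α : ℝ => (α ^ n)⁻¹) atTop (𝓝 0) := fun n hn =>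
    tendsto_inv_atTop_zero.comp (tendsto_pow_atTop hn)
  have hnum : Tendsto (fun α : ℝ => -a * (α ^ 2)⁻¹ + b / 2 * (α ^ 1)⁻¹) atTop (𝓝 0) := by
    simpa using ((hinv 2 two_ne_zero).const_mul (-a)).add ((hinv 1 one_ne_zero).const_mul (b / 2))
  have hrad : Tendsto (fun α : ℝ => r * (α ^ 6)⁻¹ + p * (α ^ 4)⁻¹ + q / 4 * (α ^ 2)⁻¹ + q₆)
      atTop (𝓝 q₆) := by
    simpa using ((((hinv 6 (by norm_num)).const_mul r).add
      ((hinv 4 (by norm_num)).const_mul p)).add ((hinv 2 two_ne_zero).const_mul (q / 4))).add_const q₆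
  have hquot := hnum.div hrad.sqrt (Real.sqrt_pos.2 hq₆).ne'
  rw [zero_div] at hquot
  refine hquot.congr' ?_
  filter_upwards [eventually_gt_atTop 0] with α hα
  have hα3 : 0 < α ^ 3 := by positivity
  have hsqrt : Real.sqrt (r + p * α ^ 2 + q / 4 * α ^ 4 + q₆ * α ^ 6) =
      α ^ 3 * Real.sqrt (r * (α ^ 6)⁻¹ + p * (α ^ 4)⁻¹ + q / 4 * (α ^ 2)⁻¹ + q₆) := by
    rw [← Real.sqrt_sq hα3.le, ← Real.sqrt_mul (sq_nonneg _)]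
    congr 1
    field_simp
  rw [Pi.div_apply, hsqrt, ← mul_div_mul_left _ _ hα3.ne']
  congr 1
  field_simp

/-- With a third-order variance correction `q₆ α⁶` (with `q₆ > 0`), the
probability-of-improvement objective
`g(α) = (-aα + (b/2)α²) / √(r + pα² + (q/4)α⁴ + q₆α⁶)` satisfies `g 0 = 0`,
`g(α) → 0` as `α → ∞`, takes strictly negative values, and attains its infimum over
`[0, ∞)` at some finite `α⋆ ∈ (0, ∞)` with `g α⋆ < 0` — even when the curvature `b`
is negative, the optimal step size is finite and positive. -/
theorem pi_step_size_finite_with_sixth_order_correction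
    (a b r p q q₆ : ℝ) (ha : 0 < a) (hr : 0 < r) (hp : 0 ≤ p) (hq : 0 ≤ q) (hq₆ : 0 < q₆)
    (g : ℝ → ℝ)
    (hg : ∀ α : ℝ, g α =
      (-a * α + b / 2 * α ^ 2) /
        Real.sqrt (r + p * α ^ 2 + q / 4 * α ^ 4 + q₆ * α ^ 6)) :
    g 0 = 0 ∧
    Tendsto g atTop (nhds 0) ∧
    (∃ α : ℝ, 0 ≤ α ∧ g α < 0) ∧
    (∃ αstar : ℝ, 0 < αstar ∧ (∀ α : ℝ, 0 ≤ α → g αstar ≤ g α) ∧ g αstar < 0) := by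
  have hsqrt_pos : ∀ α : ℝ, 0 < Real.sqrt (r + p * α ^ 2 + q / 4 * α ^ 4 + q₆ * α ^ 6) :=
    fun α => Real.sqrt_pos.2 (by positivity)
  have hg_eq := funext hg
  have hcont : Continuous g := by
    rw [hg_eq]
    exact Continuous.div (by fun_prop) (by fun_prop) fun α => (hsqrt_pos α).ne'
  have hg0 : g 0 = 0 := by simp [hg]
  have hlim : Tendsto g atTop (𝓝 0) :=
    hg_eq ▸ tendsto_div_sqrt_sixth_degree_atTop a b r p q hq₆
  obtain ⟨α₀, hα₀, hnum⟩ := exists_pos_neg_mul_add_mul_sq ha b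
  have hgα₀ : g α₀ < 0 := hg α₀ ▸ div_neg_of_neg_of_pos hnum (hsqrt_pos α₀)
  obtain ⟨αstar, hαstar, hmin⟩ :=
    exists_isMinOn_Ici_of_tendsto_atTop hcont.continuousOn hlim hα₀.le hgα₀
  have hgαstar : g αstar < 0 := (hmin (mem_Ici.2 hα₀.le)).trans_lt hgα₀
  refine ⟨hg0, hlim, ⟨α₀, hα₀.le, hgα₀⟩, αstar, hαstar.lt_of_ne ?_,
    fun α hα => hmin hα, hgαstar⟩
  rintro rfl
  exact hgαstar.ne hg0
end
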